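/- Consider a simple system with r chemical reactions: U : ℝ^r × ℝ → ℝ smooth internal energy in the degrees of advancement ψ = (ψ_1,…,ψ_r) and entropy S, Hamiltonian H = U, a symmetric positive definite matrix (λ_{ij}) with inverse Γ = (Γ_{ij}), temperature T := ∂U/∂S, and 4-bracket (F,G;M,N) = (1/T)·(⟨∂N/∂ψ, Γ ∂G/∂ψ⟩·(∂F/∂S)·(∂M/∂S) − ⟨∂F/∂ψ, Γ ∂N/∂ψ⟩·(∂G/∂S)·(∂M/∂S) + ⟨∂M/∂ψ, Γ ∂F/∂ψ⟩·(∂G/∂S)·(∂N/∂S) − ⟨∂M/∂ψ, Γ ∂G/∂ψ⟩·(∂F/∂S)·(∂N/∂S)). Let (ψ(t), S(t)) be a smooth curve along which T ≠ 0. If for every smooth F : ℝ^r × ℝ → ℝ one has d/dt F(ψ,S) = (F,H;S,H) along the curve, then the curve satisfies ψ̇_i = −Σ_j Γ_{ij}·(∂U/∂ψ_j) for each i and Ṡ = (1/T)·⟨∂U/∂ψ, Γ ∂U/∂ψ⟩. -/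

import Mathlib

open scoped RealInnerProductSpace

noncomputable section

/-- Partial gradient of `F (ψ, S)` in the first (degrees of advancement) variable. -/
def pdψ {r : ℕ} (F : EuclideanSpace ℝ (Fin r) → ℝ → ℝ)
    (ψ : EuclideanSpace ℝ (Fin r)) (S : ℝ) : EuclideanSpace ℝ (Fin r) :=
  gradient (fun x => F x S) ψ

/-- Partial derivative of `F (ψ, S)` in the entropy variable. -/
def pdS {r : ℕ} (F : EuclideanSpace ℝ (Fin r) → ℝ → ℝ)
    (ψ : EuclideanSpace ℝ (Fin r)) (S : ℝ) : ℝ :=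
  deriv (fun s => F ψ s) S

/-- Matrix-vector action on Euclidean space. -/
def mulVecE {r : ℕ} (A : Matrix (Fin r) (Fin r) ℝ) (v : EuclideanSpace ℝ (Fin r)) :
    EuclideanSpace ℝ (Fin r) :=
  (WithLp.equiv 2 (Fin r → ℝ)).symm (A.mulVec ((WithLp.equiv 2 (Fin r → ℝ)) v))

/-- The purely dissipative metriplectic 4-bracket of a simple system with
chemical reactions, with `Γ = λ⁻¹` and `T = ∂U/∂S`. -/
def bracket4chem {r : ℕ} (Γ : Matrix (Fin r) (Fin r) ℝ)
    (H F G M N : EuclideanSpace ℝ (Fin r) → ℝ → ℝ)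
    (ψ : EuclideanSpace ℝ (Fin r)) (S : ℝ) : ℝ :=
  (1 / pdS H ψ S) *
    (⟪pdψ N ψ S, mulVecE Γ (pdψ G ψ S)⟫ * pdS F ψ S * pdS M ψ S
      - ⟪pdψ F ψ S, mulVecE Γ (pdψ N ψ S)⟫ * pdS G ψ S * pdS M ψ S
      + ⟪pdψ M ψ S, mulVecE Γ (pdψ F ψ S)⟫ * pdS G ψ S * pdS N ψ S
      - ⟪pdψ M ψ S, mulVecE Γ (pdψ G ψ S)⟫ * pdS F ψ S * pdS N ψ S)

/-- Gradient of the `i`-th coordinate function on Euclidean space. -/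
lemma gradient_coord {r : ℕ} (i : Fin r) (x : EuclideanSpace ℝ (Fin r)) :
    gradient (fun y : EuclideanSpace ℝ (Fin r) => y i) x = EuclideanSpace.single i 1 := by
  refine HasGradientAt.gradient ?_
  rw [hasGradientAt_iff_hasFDerivAt]
  have hd : InnerProductSpace.toDual ℝ (EuclideanSpace ℝ (Fin r)) (EuclideanSpace.single i 1)
      = EuclideanSpace.proj (𝕜 := ℝ) i := by
    ext y
    simp [EuclideanSpace.inner_single_left]
  rw [hd]
  exact (EuclideanSpace.proj (𝕜 := ℝ) i).hasFDerivAt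

lemma inner_single_mulVecE {r : ℕ} (Γ : Matrix (Fin r) (Fin r) ℝ) (i : Fin r)
    (v : EuclideanSpace ℝ (Fin r)) :
    ⟪EuclideanSpace.single i (1 : ℝ), mulVecE Γ v⟫ = ∑ j, Γ i j * v j := by
  simp [mulVecE, EuclideanSpace.inner_single_left, Matrix.mulVec, dotProduct]

/-- If a simple system with `r` chemical reactions evolves by the purely
dissipative metriplectic dynamics `Ḟ = (F,H;S,H)` for all smooth observables
`F`, then it satisfies the chemical kinetics equations. -/
theorem chemical_reactions_equations {r : ℕ}
    (U : EuclideanSpace ℝ (Fin r) → ℝ → ℝ)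
    (hU : ContDiff ℝ (⊤ : ℕ∞) (fun x : EuclideanSpace ℝ (Fin r) × ℝ => U x.1 x.2))
    (lam Γ : Matrix (Fin r) (Fin r) ℝ)
    (hlam : lam.PosDef) (hlamsymm : lam.IsSymm)
    (hΓ : lam * Γ = 1 ∧ Γ * lam = 1)
    (ψ : ℝ → EuclideanSpace ℝ (Fin r)) (S : ℝ → ℝ)
    (hψ : ContDiff ℝ (⊤ : ℕ∞) ψ) (hS : ContDiff ℝ (⊤ : ℕ∞) S)
    (hT : ∀ t : ℝ, pdS U (ψ t) (S t) ≠ 0)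
    (hdyn : ∀ F : EuclideanSpace ℝ (Fin r) → ℝ → ℝ,
      ContDiff ℝ (⊤ : ℕ∞) (fun x : EuclideanSpace ℝ (Fin r) × ℝ => F x.1 x.2) →
      ∀ t : ℝ,
        deriv (fun τ => F (ψ τ) (S τ)) t
          = bracket4chem Γ U F U (fun _ s => s) U (ψ t) (S t)) :
    ∀ t : ℝ,
      (∀ i : Fin r,
        deriv (fun τ => ψ τ i) t = - ∑ j, Γ i j * pdψ U (ψ t) (S t) j)
      ∧ deriv S t = (1 / pdS U (ψ t) (S t)) *
          ⟪pdψ U (ψ t) (S t), mulVecE Γ (pdψ U (ψ t) (S t))⟫ := by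
  intro t
  have hT' := hT t
  have hpdSM : pdS (fun _ s => s) (ψ t) (S t) = 1 := by
    simp [pdS]
  have hpdψM : pdψ (fun (_ : EuclideanSpace ℝ (Fin r)) (s : ℝ) => s) (ψ t) (S t) = 0 :=
    gradient_const _ _
  constructor
  · intro i
    have hsm : ContDiff ℝ (⊤ : ℕ∞)
        (fun x : EuclideanSpace ℝ (Fin r) × ℝ => (fun y (_ : ℝ) => y i) x.1 x.2) :=
      (EuclideanSpace.proj (𝕜 := ℝ) i).contDiff.comp contDiff_fst
    have h := hdyn (fun y _ => y i) hsm t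
    have hpdS : pdS (fun y (_ : ℝ) => y i) (ψ t) (S t) = 0 := by
      simp [pdS]
    have hpdψ : pdψ (fun y (_ : ℝ) => y i) (ψ t) (S t) = EuclideanSpace.single i 1 :=
      gradient_coord i _
    rw [bracket4chem, hpdS, hpdψ, hpdSM, hpdψM, inner_single_mulVecE] at h
    rw [h]
    simp only [inner_zero_left]
    field_simp
    ring
  · have h := hdyn (fun _ s => s) contDiff_snd t
    rw [bracket4chem, hpdSM, hpdψM] at h
    rw [show deriv S t = deriv (fun τ => S τ) t from rfl, h]
    simp only [inner_zero_left]
    ring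

end
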